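/- Let V_c be a commutative unital algebra and ∇ : V_c → V_c ⊗ V_c satisfy a • ∇(b) = ∇(a) • b = ∇(ab). Then the iterated coproducts (∇ ⊗ id) ∘ ∇ and (id ⊗ ∇) ∘ ∇ agree, i.e. ∇ is automatically coassociative. -/
import Mathlib

open TensorProduct

/-- `nabla` satisfying `a • nabla(b) = nabla(a) • b = nabla(ab)` is automatically
coassociative. -/
theorem stmt15 {k V : Type*} [Field k] [CharZero k] [CommRing V] [Algebra k V]
    (nabla : V →ₗ[k] V ⊗[k] V)
    (h1 : ∀ a b : V, TensorProduct.map (LinearMap.mulLeft k a) LinearMap.id (nabla b)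
        = TensorProduct.map LinearMap.id (LinearMap.mulRight k b) (nabla a))
    (h2 : ∀ a b : V, TensorProduct.map (LinearMap.mulLeft k a) LinearMap.id (nabla b) = nabla (a * b)) :
    ∀ a : V,
      TensorProduct.assoc k V V V (TensorProduct.map nabla LinearMap.id (nabla a))
        = TensorProduct.map LinearMap.id nabla (nabla a) := by
  intro a
  have key : ∀ b : V, nabla b
      = TensorProduct.map LinearMap.id (LinearMap.mulRight k b) (nabla 1) := by
    intro b
    have h := h1 1 b
    simpa using h
  have key' : ∀ b : V, nabla b
      = TensorProduct.map (LinearMap.mulLeft k b) LinearMap.id (nabla 1) := by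
    intro b
    have h := h2 b 1
    rw [mul_one] at h
    exact h.symm
  set μ : V ⊗[k] V →ₗ[k] V :=
    LinearMap.mul' k V ∘ₗ TensorProduct.map (LinearMap.mulRight k a) LinearMap.id with hμ
  set T : (V ⊗[k] V) ⊗[k] (V ⊗[k] V) →ₗ[k] V ⊗[k] (V ⊗[k] V) :=
    (TensorProduct.map LinearMap.id (TensorProduct.map μ LinearMap.id))
      ∘ₗ (TensorProduct.map LinearMap.id (TensorProduct.assoc k V V V).symm.toLinearMap)
      ∘ₗ (TensorProduct.assoc k V V (V ⊗[k] V)).toLinearMap with hT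
  have Tpure : ∀ (u v x y : V), T ((u ⊗ₜ[k] v) ⊗ₜ[k] (x ⊗ₜ[k] y)) = u ⊗ₜ[k] ((v * a * x) ⊗ₜ[k] y) := by
    intro u v x y
    simp [hT, hμ]
  have Lcore : ∀ (x y : V) (z : V ⊗[k] V),
      TensorProduct.assoc k V V V
          ((TensorProduct.map LinearMap.id (LinearMap.mulRight k (a * x)) z) ⊗ₜ[k] y)
        = T (z ⊗ₜ[k] (x ⊗ₜ[k] y)) := by
    intro x y z
    induction z using TensorProduct.induction_on with
    | zero => simp only [LinearMap.map_zero, zero_tmul, tmul_zero, LinearEquiv.map_zero]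
    | tmul u v => simp [Tpure, mul_assoc]
    | add z₁ z₂ ih₁ ih₂ =>
        simp only [map_add, add_tmul]
        rw [ih₁, ih₂]
  have Rcore : ∀ (x y : V) (z : V ⊗[k] V),
      x ⊗ₜ[k] (TensorProduct.map (LinearMap.mulLeft k (y * a)) LinearMap.id z)
        = T ((x ⊗ₜ[k] y) ⊗ₜ[k] z) := by
    intro x y z
    induction z using TensorProduct.induction_on with
    | zero => simp only [LinearMap.map_zero, zero_tmul, tmul_zero, LinearEquiv.map_zero]
    | tmul u v => simp [Tpure, mul_assoc]
    | add z₁ z₂ ih₁ ih₂ =>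
        simp only [map_add, tmul_add]
        rw [ih₁, ih₂]
  conv_lhs => rw [key' a]
  conv_rhs => rw [key a]
  have L : ∀ w : V ⊗[k] V,
      TensorProduct.assoc k V V V
          (TensorProduct.map nabla LinearMap.id
            (TensorProduct.map (LinearMap.mulLeft k a) LinearMap.id w))
        = T ((nabla 1) ⊗ₜ[k] w) := by
    intro w
    induction w using TensorProduct.induction_on with
    | zero => simp only [LinearMap.map_zero, zero_tmul, tmul_zero, LinearEquiv.map_zero]
    | tmul x y =>
        rw [TensorProduct.map_tmul, TensorProduct.map_tmul]
        simp only [LinearMap.id_apply, LinearMap.mulLeft_apply]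
        rw [key (a * x)]
        exact Lcore x y (nabla 1)
    | add w₁ w₂ ih₁ ih₂ => simp only [map_add, tmul_add, ih₁, ih₂]
  have R : ∀ z : V ⊗[k] V,
      TensorProduct.map LinearMap.id nabla
          (TensorProduct.map LinearMap.id (LinearMap.mulRight k a) z)
        = T (z ⊗ₜ[k] (nabla 1)) := by
    intro z
    induction z using TensorProduct.induction_on with
    | zero => simp only [LinearMap.map_zero, zero_tmul, tmul_zero, LinearEquiv.map_zero]
    | tmul x y =>
        rw [TensorProduct.map_tmul, TensorProduct.map_tmul]
        simp only [LinearMap.id_apply, LinearMap.mulRight_apply]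
        rw [key' (y * a)]
        exact Rcore x y (nabla 1)
    | add z₁ z₂ ih₁ ih₂ => simp only [map_add, add_tmul, ih₁, ih₂]
  rw [L (nabla 1), R (nabla 1)]
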